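/- arXiv:2212.01441 — 5 statements merged into one kernel-verified Lean document; each statement's English description precedes it below -/
import Mathlib

section
/- Define α_n = (H+1)/(H+n) for n ≥ 1 and α_n^i = α_i · ∏_{j=i+1}^n (1-α_j) for 1 ≤ i ≤ n. Then for every n ≥ 1, 1/√n ≤ ∑_{i=1}^n α_n^i/√i ≤ 2/√n. -/
open Finset

theorem vlearning_weights_sqrt_bound
    (H : ℕ) (hH : 1 ≤ H)
    (α : ℕ → ℝ) (hα : ∀ n, α n = ((H : ℝ) + 1) / ((H : ℝ) + n))
    (w : ℕ → ℕ → ℝ)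
    (hw : ∀ i n, w n i = α i * ∏ j ∈ Finset.Icc (i + 1) n, (1 - α j)) :
    ∀ n : ℕ, 1 ≤ n →
      1 / Real.sqrt n ≤ ∑ i ∈ Finset.Icc 1 n, w n i / Real.sqrt i ∧
      ∑ i ∈ Finset.Icc 1 n, w n i / Real.sqrt i ≤ 2 / Real.sqrt n := by
  intro n hn
  induction n, hn using Nat.le_induction with
  | base =>
      have h1 : w 1 1 = 1 := by
        rw [hw, hα, Finset.Icc_eq_empty (by omega), Finset.prod_empty, mul_one]
        norm_num
        have : (0:ℝ) ≤ H := H.cast_nonneg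
        intro h; linarith
      simp [Finset.Icc_self, h1]
  | succ m hm ih =>
      obtain ⟨ih1, ih2⟩ := ih
      set Sm := ∑ i ∈ Finset.Icc 1 m, w m i / Real.sqrt i with hSm
      have hrec : ∑ i ∈ Finset.Icc 1 (m+1), w (m+1) i / Real.sqrt i
          = (1 - α (m+1)) * Sm + α (m+1) / Real.sqrt (m+1) := by
        rw [Finset.sum_Icc_succ_top (by omega : 1 ≤ m+1)]
        congr 1
        · rw [hSm, Finset.mul_sum]
          apply Finset.sum_congr rfl
          intro i hi
          have hi2 := (Finset.mem_Icc.mp hi).2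
          rw [hw i (m+1), hw i m, Finset.prod_Icc_succ_top (by omega : i+1 ≤ m+1)]
          ring
        · rw [hw, Finset.Icc_eq_empty (by omega), Finset.prod_empty, mul_one]
          norm_num
      -- numeric setup
      have hcast : ((m+1 : ℕ) : ℝ) = (m : ℝ) + 1 := by push_cast; ring
      rw [hrec, hcast]
      have hm1 : (1 : ℝ) ≤ (m : ℝ) := by exact_mod_cast hm
      set sm := Real.sqrt m with hsmdef
      set sn := Real.sqrt ((m : ℝ) + 1) with hsndef
      have hsm : 0 < sm := Real.sqrt_pos.mpr (by linarith)
      have hsn : 0 < sn := Real.sqrt_pos.mpr (by linarith)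
      have hsm2 : sm ^ 2 = (m : ℝ) := Real.sq_sqrt (by linarith)
      have hsn2 : sn ^ 2 = (m : ℝ) + 1 := Real.sq_sqrt (by linarith)
      have hsmsn : sm ≤ sn := Real.sqrt_le_sqrt (by linarith)
      have hH1 : (1 : ℝ) ≤ (H : ℝ) := by exact_mod_cast hH
      have ha : α (m+1) = ((H : ℝ) + 1) / ((H : ℝ) + (m : ℝ) + 1) := by
        rw [hα]; push_cast; ring_nf
      set D := (H : ℝ) + (m : ℝ) + 1 with hD
      have hDpos : 0 < D := by positivity
      have ha_pos : 0 < α (m+1) := by rw [ha]; positivity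
      have ha_le1 : α (m+1) ≤ 1 := by
        rw [ha, div_le_one hDpos]; linarith
      have hone : 1 - α (m+1) = sm ^ 2 / D := by
        rw [ha, hsm2]; field_simp; linarith
      constructor
      · -- lower bound
        have h1 : 1 / sn ≤ 1 / sm := by
          apply one_div_le_one_div_of_le hsm hsmsn
        have h2 : (1 - α (m+1)) * (1 / sn) ≤ (1 - α (m+1)) * Sm := by
          apply mul_le_mul_of_nonneg_left (le_trans h1 ih1) (by linarith)
        have h3 : (1 - α (m+1)) * (1 / sn) + α (m+1) / sn = 1 / sn := by
          field_simp; ring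
        linarith
      · -- upper bound
        have h2 : (1 - α (m+1)) * Sm ≤ (1 - α (m+1)) * (2 / sm) := by
          apply mul_le_mul_of_nonneg_left ih2 (by linarith)
        have key : (1 - α (m+1)) * (2 / sm) + α (m+1) / sn ≤ 2 / sn := by
          rw [hone, ha]
          rw [div_mul_div_comm, div_add_div _ _ (by positivity) (by positivity),
            div_le_div_iff₀ (by positivity) hsn]
          have hamgm : 2 * sm * sn ≤ sm ^ 2 + sn ^ 2 := by nlinarith [sq_nonneg (sm - sn)]
          have hc : D * (((H:ℝ) + 1) / D) = (H:ℝ) + 1 := mul_div_cancel₀ _ (ne_of_gt hDpos)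
          nlinarith [mul_le_mul_of_nonneg_left hamgm (mul_pos hsm hsn).le, hc,
            mul_pos hsm hsn, hsm2, hsn2, hH1, hm1]
        linarith
end

section
/- Define α_n = (H+1)/(H+n) for n ≥ 1 and α_n^i = α_i · ∏_{j=i+1}^n (1-α_j) for 1 ≤ i ≤ n. Then for every n ≥ 1 and every i with 1 ≤ i ≤ n, α_n^i ≤ 2H/n. -/
open Finset

theorem vlearning_weights_max_bound
    (H : ℕ) (hH : 1 ≤ H)
    (α : ℕ → ℝ) (hα : ∀ n, α n = ((H : ℝ) + 1) / ((H : ℝ) + n))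
    (w : ℕ → ℕ → ℝ)
    (hw : ∀ i n, w n i = α i * ∏ j ∈ Finset.Icc (i + 1) n, (1 - α j)) :
    ∀ n, 1 ≤ n → ∀ i, 1 ≤ i → i ≤ n → w n i ≤ 2 * (H : ℝ) / n := by
  have hHpos : (0:ℝ) < H := by exact_mod_cast hH
  intro n
  induction n with
  | zero => omega
  | succ m ih =>
    intro _ i hi1 hin
    rcases eq_or_lt_of_le hin with heq | hlt
    · subst heq
      rw [hw, Finset.Icc_eq_empty (by omega), Finset.prod_empty, mul_one, hα]
      push_cast
      rw [div_le_div_iff₀ (by positivity) (by positivity)]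
      have hH1 : (1:ℝ) ≤ (H:ℝ) := by exact_mod_cast hH
      have hm0 : (0:ℝ) ≤ (m:ℝ) := Nat.cast_nonneg m
      nlinarith [mul_nonneg (sub_nonneg.2 hH1) hm0, sq_nonneg (H:ℝ)]
    · have him : i ≤ m := by omega
      have hm1 : 1 ≤ m := by omega
      have hmp : (0:ℝ) < (m:ℝ) := by exact_mod_cast hm1
      have hrec : w (m+1) i = (1 - α (m+1)) * w m i := by
        rw [hw i (m+1), hw i m,
          Finset.prod_Icc_succ_top (by omega : i+1 ≤ m+1)]
        ring
      have h1 : w m i ≤ 2 * (H:ℝ) / m := ih hm1 i hi1 him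
      have h2 : 1 - α (m+1) = (m:ℝ) / ((H:ℝ) + m + 1) := by
        rw [hα]
        push_cast
        rw [show (H:ℝ) + ((m:ℝ)+1) = (H:ℝ) + (m:ℝ) + 1 from by ring]
        rw [eq_div_iff (by positivity), sub_mul, div_mul_cancel₀ _ (by positivity : (H:ℝ) + (m:ℝ) + 1 ≠ 0)]
        ring
      have hαnn : 0 ≤ 1 - α (m+1) := by rw [h2]; positivity
      rw [hrec]
      calc (1 - α (m+1)) * w m i ≤ (1 - α (m+1)) * (2 * (H:ℝ) / m) :=
            mul_le_mul_of_nonneg_left h1 hαnn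
        _ = 2 * (H:ℝ) / ((H:ℝ) + m + 1) := by
            rw [h2]; field_simp
        _ ≤ 2 * (H:ℝ) / ((m:ℝ) + 1) := by
            apply div_le_div_of_nonneg_left (by linarith) (by linarith) (by linarith)
        _ = 2 * (H:ℝ) / ((m+1 : ℕ):ℝ) := by push_cast; ring
end

section
/- Let k : ℕ → ℕ be a strictly increasing sequence (k_n is the episode of the n-th visit) and let d : ℕ → ℕ be a delay sequence with d_i ≤ d_max for all i. For n ≥ 1 define e_n = min { j ∈ [1, n-1] : d_j + k_j > k_n - 1 } if this set is nonempty, and e_n = n otherwise. Then for every n ≥ 1, n - e_n ≤ d_max. -/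
/-!
If `e n ≠ n`, then `j = e n` is a visit whose delay reaches past episode `k n - 1`, i.e.
`k n ≤ d j + k j`; since `k` is strictly increasing, `n - j ≤ k n - k j ≤ d j ≤ dmax`.
-/

theorem StrictMono.sub_le_sub_apply {k : ℕ → ℕ} (hk : StrictMono k) (i j : ℕ) :
    j - i ≤ k j - k i := by
  rcases le_total i j with hij | hji
  · have := hk.add_le_nat (j - i) i
    rw [Nat.sub_add_cancel hij] at this
    omega
  · simp [Nat.sub_eq_zero_of_le hji]

theorem StrictMono.sub_le_of_lt_add {k : ℕ → ℕ} (hk : StrictMono k) {j n δ : ℕ}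
    (hδ : k n - 1 < δ + k j) : n - j ≤ δ :=
  (hk.sub_le_sub_apply j n).trans (by omega)

theorem earliest_unreceived_gap_le_dmax
    (k d : ℕ → ℕ) (hk : StrictMono k)
    (dmax : ℕ) (hd : ∀ i, d i ≤ dmax)
    (e : ℕ → ℕ)
    (he : ∀ n, e n = sInf ({j | 1 ≤ j ∧ j ≤ n - 1 ∧ k n - 1 < d j + k j} ∪ {n})) :
    ∀ n, 1 ≤ n → n - e n ≤ dmax := by
  intro n _
  have hmem : e n ∈ ({j | 1 ≤ j ∧ j ≤ n - 1 ∧ k n - 1 < d j + k j} ∪ {n} : Set ℕ) :=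
    he n ▸ Nat.sInf_mem ⟨n, Or.inr rfl⟩
  rcases hmem with ⟨-, -, hunreceived⟩ | hself
  · exact (hk.sub_le_of_lt_add hunreceived).trans (hd _)
  · rw [Set.mem_singleton_iff.mp hself, Nat.sub_self]
    exact Nat.zero_le _
end

section
/- Let k : ℕ → ℕ be strictly increasing and d : ℕ → ℕ a delay sequence bounded by d_max. Define e_n as the smallest j ∈ [1, n-1] with d_j + k_j > k_n - 1 (and e_n = n if no such j exists), and define T_n = ∑_{i=1}^n (i - e_i). Then T_n ≤ n · d_max for every n ≥ 1. -/
open Finset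

theorem StrictMono.sub_le_sub_apply_nat {k : ℕ → ℕ} (hk : StrictMono k) (i j : ℕ) :
    i - j ≤ k i - k j := by
  rcases le_total j i with hji | hij
  · have := hk.add_le_nat (i - j) j
    rw [Nat.sub_add_cancel hji] at this
    omega
  · simp [Nat.sub_eq_zero_of_le hij]

/-- Since `k` grows by at least one per step, `k i ≤ c + k j` forces `i - j ≤ c`. -/
theorem StrictMono.sub_sInf_union_singleton_le {k : ℕ → ℕ} (hk : StrictMono k) {S : Set ℕ}
    {i c : ℕ} (hS : ∀ j ∈ S, k i - 1 < c + k j) : i - sInf (S ∪ {i}) ≤ c := by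
  rcases Nat.sInf_mem (⟨i, Or.inr rfl⟩ : (S ∪ {i}).Nonempty) with hmem | hmem
  · have := hk.sub_le_sub_apply_nat i (sInf (S ∪ {i}))
    have := hS _ hmem
    omega
  · rw [Set.mem_singleton_iff.mp hmem, Nat.sub_self]
    exact c.zero_le

theorem total_delay_count_le
    (k d : ℕ → ℕ) (hk : StrictMono k)
    (dmax : ℕ) (hd : ∀ i, d i ≤ dmax)
    (e : ℕ → ℕ)
    (he : ∀ n, e n = sInf ({j | 1 ≤ j ∧ j ≤ n - 1 ∧ k n - 1 < d j + k j} ∪ {n}))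
    (T : ℕ → ℕ)
    (hT : ∀ n, T n = ∑ i ∈ Finset.Icc 1 n, (i - e i)) :
    ∀ n, 1 ≤ n → T n ≤ n * dmax := by
  have hgap (i : ℕ) : i - e i ≤ dmax := by
    rw [he i]
    exact hk.sub_sInf_union_singleton_le fun j hj =>
      hj.2.2.trans_le (Nat.add_le_add_right (hd j) _)
  intro n _
  calc T n = ∑ i ∈ Icc 1 n, (i - e i) := hT n
    _ ≤ ∑ _i ∈ Icc 1 n, dmax := sum_le_sum fun i _ => hgap i
    _ = n * dmax := by simp
end

section
/- Suppose x : ℕ → ℝ≥0 satisfies for every n the inequality x_n ≥ (1 + √(1 + 4C · ∑_{y=1}^{n-1} x_y)) / (2C), where C > 0 is a constant. Then x_n ≥ n/(2C) for every n ≥ 1. -/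
/-! By strong induction: if `x y ≥ y / (2C)` for all `1 ≤ y < n`, then `4C · ∑_{y<n} x y ≥ n (n - 1)`,
hence `1 + 4C · ∑_{y<n} x y ≥ (n - 1)²`, and the recursive bound gives `x n ≥ (1 + (n - 1)) / (2C)`. -/

open Finset

theorem two_mul_sum_Icc_one_sub_one_cast (n : ℕ) :
    2 * ∑ y ∈ Icc 1 (n - 1), (y : ℝ) = n * (n - 1) := by
  induction n with
  | zero => simp
  | succ k ih =>
    rcases Nat.eq_zero_or_pos k with rfl | hk
    · simp
    · rw [Nat.add_sub_cancel, ← Nat.sub_add_cancel hk, sum_Icc_succ_top (by omega),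
        Nat.sub_add_cancel hk, mul_add, ih]
      push_cast
      ring

theorem sub_one_le_sqrt_one_add {t s : ℝ} (h : t * (t - 1) ≤ s) : t - 1 ≤ √(1 + s) := by
  rcases le_or_gt 1 t with ht | ht
  · exact Real.le_sqrt_of_sq_le (by nlinarith)
  · exact (sub_neg.mpr ht).le.trans (Real.sqrt_nonneg _)

theorem skipping_metric_linear_growth_general
    (C : ℝ) (hC : 0 < C)
    (x : ℕ → ℝ)
    (h : ∀ n, x n ≥
      (1 + Real.sqrt (1 + 4 * C * ∑ y ∈ Finset.Icc 1 (n - 1), x y)) / (2 * C)) :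
    ∀ n, 1 ≤ n → x n ≥ (n : ℝ) / (2 * C) := by
  intro n
  induction n using Nat.strong_induction_on with
  | _ n ih =>
  intro _
  have hsum : (n : ℝ) * (n - 1) ≤ 4 * C * ∑ y ∈ Icc 1 (n - 1), x y :=
    calc (n : ℝ) * (n - 1) = 4 * C * ∑ y ∈ Icc 1 (n - 1), (y : ℝ) / (2 * C) := by
          rw [← sum_div, ← two_mul_sum_Icc_one_sub_one_cast]
          field_simp
          ring
      _ ≤ 4 * C * ∑ y ∈ Icc 1 (n - 1), x y := by
          gcongr with y hy
          rw [mem_Icc] at hy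
          exact ih y (by omega) hy.1
  calc (n : ℝ) / (2 * C) ≤ (1 + √(1 + 4 * C * ∑ y ∈ Icc 1 (n - 1), x y)) / (2 * C) := by
        gcongr
        linarith [sub_one_le_sqrt_one_add hsum]
    _ ≤ x n := h n

theorem skipping_metric_linear_growth
    (C : ℝ) (hC : 0 < C)
    (x : ℕ → ℝ) (hx : ∀ n, 0 ≤ x n)
    (h : ∀ n, x n ≥
      (1 + Real.sqrt (1 + 4 * C * ∑ y ∈ Finset.Icc 1 (n - 1), x y)) / (2 * C)) :
    ∀ n, 1 ≤ n → x n ≥ (n : ℝ) / (2 * C) :=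
  skipping_metric_linear_growth_general C hC x h
end
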